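/- arXiv:2304.02658 — 13 statements merged into one kernel-verified Lean document; each statement's English description precedes it below -/
import Mathlib

section
/- For every ℓ ∈ {0, …, L}, the backpropagation error e ℓ equals the gradient of the composite map 𝓛 ∘ f (L−1) ∘ ⋯ ∘ f ℓ evaluated at the feedforward value μ ℓ; that is, the downward recursion e L := g, e ℓ := (A ℓ)† (e (ℓ+1)) computes exactly the gradients of the total loss with respect to the intermediate feedforward activations. -/
open InnerProductSpace in
lemma gradient_comp_adjoint {nn mm : ℕ}
    (f : EuclideanSpace ℝ (Fin nn) → EuclideanSpace ℝ (Fin mm))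
    (g : EuclideanSpace ℝ (Fin mm) → ℝ) (x : EuclideanSpace ℝ (Fin nn))
    (hfx : DifferentiableAt ℝ f x) (hg : DifferentiableAt ℝ g (f x)) :
    gradient (fun y => g (f y)) x =
      ContinuousLinearMap.adjoint (fderiv ℝ f x) (gradient g (f x)) := by
  apply ext_inner_right ℝ
  intro v
  rw [ContinuousLinearMap.adjoint_inner_left]
  have hcomp : fderiv ℝ (fun y => g (f y)) x = (fderiv ℝ g (f x)).comp (fderiv ℝ f x) :=
    fderiv_comp x hg hfx
  simp only [gradient, toDual_symm_apply, hcomp, ContinuousLinearMap.comp_apply]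

/-- For every `ℓ ≤ L`, the backpropagation error `e ℓ`, defined by the downward
recursion `e L = gradient 𝓛 (μ L)`, `e ℓ = (A ℓ)† (e (ℓ+1))`, equals the gradient of the
composite map `𝓛 ∘ f (L-1) ∘ ⋯ ∘ f ℓ` (encoded by `Φ ℓ`) at the feedforward value `μ ℓ`. -/
theorem backprop_errors_are_gradients
    (L : ℕ) (hL : 1 ≤ L) (n : ℕ → ℕ)
    (f : ∀ ℓ : ℕ, EuclideanSpace ℝ (Fin (n ℓ)) → EuclideanSpace ℝ (Fin (n (ℓ + 1))))
    (hf : ∀ ℓ, Differentiable ℝ (f ℓ))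
    (μ : ∀ ℓ : ℕ, EuclideanSpace ℝ (Fin (n ℓ)))
    (hμ : ∀ ℓ, μ (ℓ + 1) = f ℓ (μ ℓ))
    (𝓛 : EuclideanSpace ℝ (Fin (n L)) → ℝ) (h𝓛 : Differentiable ℝ 𝓛)
    (e : ∀ ℓ : ℕ, EuclideanSpace ℝ (Fin (n ℓ)))
    (heL : e L = gradient 𝓛 (μ L))
    (he : ∀ ℓ, ℓ < L → e ℓ = ContinuousLinearMap.adjoint (fderiv ℝ (f ℓ) (μ ℓ)) (e (ℓ + 1)))
    (Φ : ∀ ℓ : ℕ, EuclideanSpace ℝ (Fin (n ℓ)) → ℝ)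
    (hΦL : Φ L = 𝓛)
    (hΦ : ∀ ℓ, ℓ < L → Φ ℓ = fun x => Φ (ℓ + 1) (f ℓ x)) :
    ∀ ℓ, ℓ ≤ L → e ℓ = gradient (Φ ℓ) (μ ℓ) := by
  have key : ∀ d ℓ, ℓ + d = L →
      Differentiable ℝ (Φ ℓ) ∧ e ℓ = gradient (Φ ℓ) (μ ℓ) := by
    intro d
    induction d with
    | zero =>
      intro ℓ h
      simp only [Nat.add_zero] at h
      subst h
      exact ⟨hΦL ▸ h𝓛, heL.trans (by rw [hΦL])⟩
    | succ d ih =>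
      intro ℓ h
      have hlt : ℓ < L := by omega
      obtain ⟨hdiff, hgrad⟩ := ih (ℓ + 1) (by omega)
      constructor
      · rw [hΦ ℓ hlt]
        exact hdiff.comp (hf ℓ)
      · rw [he ℓ hlt, hgrad, hΦ ℓ hlt, hμ ℓ,
          gradient_comp_adjoint (f ℓ) (Φ (ℓ + 1)) (μ ℓ) (hf ℓ (μ ℓ))
            (hdiff _)]
  intro ℓ hℓ
  exact (key (L - ℓ) ℓ (by omega)).2
end

section
/- Fix ℓ ∈ {0, …, L−1}, a parameter space Θ := EuclideanSpace ℝ (Fin p), and a differentiable map h : Θ × E ℓ → E (ℓ+1) with h (θ₀, μ ℓ) = μ (ℓ+1) for some θ₀ ∈ Θ. Then the gradient at θ₀ of the parameterized loss θ ↦ (𝓛 ∘ f (L−1) ∘ ⋯ ∘ f (ℓ+1)) (h (θ, μ ℓ)) equals (D_θ h (θ₀, μ ℓ))† (e (ℓ+1)), where D_θ h (θ₀, μ ℓ) is the partial Fréchet derivative of h in its first argument at (θ₀, μ ℓ) and e (ℓ+1) is the backpropagation error at layer ℓ+1. -/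
open InnerProductSpace in
private lemma grad_comp_bp {E G : Type*} [NormedAddCommGroup E] [InnerProductSpace ℝ E]
    [CompleteSpace E] [NormedAddCommGroup G] [InnerProductSpace ℝ G] [CompleteSpace G]
    (F : E → ℝ) (T : G → E) (hF : Differentiable ℝ F) (hT : Differentiable ℝ T) (x : G) :
    gradient (fun y => F (T y)) x
      = ContinuousLinearMap.adjoint (fderiv ℝ T x) (gradient F (T x)) := by
  have hcomp : fderiv ℝ (fun y => F (T y)) x = (fderiv ℝ F (T x)).comp (fderiv ℝ T x) :=
    fderiv_comp x (hF _) (hT x)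
  apply ext_inner_right ℝ
  intro v
  rw [ContinuousLinearMap.adjoint_inner_left]
  unfold gradient
  rw [toDual_symm_apply, toDual_symm_apply, hcomp]
  rfl

/-- The gradient at `θ₀` of the parameterized loss
`θ ↦ (𝓛 ∘ f (L-1) ∘ ⋯ ∘ f (ℓ+1)) (h (θ, μ ℓ))` (the composite after layer `ℓ+1` is encoded
by `Φ (ℓ+1)`) equals the adjoint of the partial Fréchet derivative of `h` in its first
argument at `(θ₀, μ ℓ)` applied to the backpropagation error `e (ℓ+1)`. -/
theorem parameter_gradient_eq_partial_adjoint_error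
    (L : ℕ) (hL : 1 ≤ L) (n : ℕ → ℕ) (p : ℕ)
    (f : ∀ ℓ : ℕ, EuclideanSpace ℝ (Fin (n ℓ)) → EuclideanSpace ℝ (Fin (n (ℓ + 1))))
    (hf : ∀ ℓ, Differentiable ℝ (f ℓ))
    (μ : ∀ ℓ : ℕ, EuclideanSpace ℝ (Fin (n ℓ)))
    (hμ : ∀ ℓ, μ (ℓ + 1) = f ℓ (μ ℓ))
    (𝓛 : EuclideanSpace ℝ (Fin (n L)) → ℝ) (h𝓛 : Differentiable ℝ 𝓛)
    (e : ∀ ℓ : ℕ, EuclideanSpace ℝ (Fin (n ℓ)))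
    (heL : e L = gradient 𝓛 (μ L))
    (he : ∀ ℓ, ℓ < L → e ℓ = ContinuousLinearMap.adjoint (fderiv ℝ (f ℓ) (μ ℓ)) (e (ℓ + 1)))
    (Φ : ∀ ℓ : ℕ, EuclideanSpace ℝ (Fin (n ℓ)) → ℝ)
    (hΦL : Φ L = 𝓛)
    (hΦ : ∀ ℓ, ℓ < L → Φ ℓ = fun x => Φ (ℓ + 1) (f ℓ x))
    (ℓ : ℕ) (hℓ : ℓ < L)
    (h : EuclideanSpace ℝ (Fin p) × EuclideanSpace ℝ (Fin (n ℓ)) →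
      EuclideanSpace ℝ (Fin (n (ℓ + 1))))
    (hh : Differentiable ℝ h)
    (θ₀ : EuclideanSpace ℝ (Fin p))
    (hθ₀ : h (θ₀, μ ℓ) = μ (ℓ + 1)) :
    gradient (fun θ => Φ (ℓ + 1) (h (θ, μ ℓ))) θ₀
      = ContinuousLinearMap.adjoint (fderiv ℝ (fun θ => h (θ, μ ℓ)) θ₀) (e (ℓ + 1)) := by
  have key : ∀ m k, k + m = L → Differentiable ℝ (Φ k) ∧ gradient (Φ k) (μ k) = e k := by
    intro m
    induction m with
    | zero => intro k hk; simp only [Nat.add_zero] at hk; subst hk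
              exact ⟨hΦL ▸ h𝓛, by rw [hΦL, heL]⟩
    | succ m ih =>
        intro k hk
        have hkL : k < L := by omega
        have hk1 : (k + 1) + m = L := by omega
        obtain ⟨hd, hg⟩ := ih (k + 1) hk1
        have hΦk := hΦ k hkL
        constructor
        · rw [hΦk]; exact hd.comp (hf k)
        · rw [hΦk, grad_comp_bp _ _ hd (hf k) (μ k), ← hμ k, hg, he k hkL]
  obtain ⟨hd, hg⟩ := key (L - (ℓ + 1)) (ℓ + 1) (by omega)
  have hT : Differentiable ℝ (fun θ => h (θ, μ ℓ)) :=
    hh.comp (differentiable_id.prodMk (differentiable_const _))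
  rw [grad_comp_bp _ _ hd hT θ₀, hθ₀, hg]
end

section
/- Let V₀, V₁, V₂ be Euclidean spaces over ℝ, let f₀ : V₀ → V₁ and f₁ : V₁ → V₂ be differentiable, let P : V₁ →L[ℝ] V₁ and Q : V₂ →L[ℝ] V₂ be self-adjoint continuous linear (precision) operators, and fix a ∈ V₀ and b ∈ V₂. Define the predictive-coding free energy contribution φ : V₁ → ℝ by φ x = (1/2)⟪x − f₀ a, P (x − f₀ a)⟫ + (1/2)⟪b − f₁ x, Q (b − f₁ x)⟫. Then for every x ∈ V₁, gradient φ x = P (x − f₀ a) − (fderiv ℝ f₁ x)† (Q (b − f₁ x)); i.e., the gradient of the free energy with respect to a latent state is the precision-weighted prediction error at that state minus the transposed Jacobian applied to the precision-weighted prediction error of its child. -/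
open scoped RealInnerProductSpace

section
variable {E F : Type*} [NormedAddCommGroup E] [InnerProductSpace ℝ E] [CompleteSpace E]

theorem HasGradientAt.add {f g : E → ℝ} {f' g' x : E} (hf : HasGradientAt f f' x)
    (hg : HasGradientAt g g' x) : HasGradientAt (fun y => f y + g y) (f' + g') x := by
  rw [hasGradientAt_iff_hasFDerivAt, map_add]
  exact hf.hasFDerivAt.add hg.hasFDerivAt

variable [NormedAddCommGroup F] [InnerProductSpace ℝ F] [CompleteSpace F]

/- Both terms of the product rule equal `⟪g' h, Q (g x)⟫` by the symmetry of `Q`, which cancels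
the factor `1 / 2`. -/
theorem HasFDerivAt.hasGradientAt_half_inner_symmetric {g : E → F} {g' : E →L[ℝ] F} {x : E}
    (hg : HasFDerivAt g g' x) {Q : F →L[ℝ] F} (hQ : (Q : F →ₗ[ℝ] F).IsSymmetric) :
    HasGradientAt (fun y => (1 / 2) * ⟪g y, Q (g y)⟫) (g'.adjoint (Q (g x))) x := by
  rw [hasGradientAt_iff_hasFDerivAt]
  refine ((hg.inner ℝ (Q.hasFDerivAt.comp x hg)).const_mul (1 / 2)).congr_fderiv ?_
  ext h
  have hsymm : ⟪g x, Q (g' h)⟫ = ⟪g' h, Q (g x)⟫ := (real_inner_comm _ _).trans (hQ _ _)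
  simp [hsymm, ContinuousLinearMap.adjoint_inner_right, real_inner_comm h]
  ring
end

theorem gradient_free_energy_latent_general
    (n₀ n₁ n₂ : ℕ)
    (f₀ : EuclideanSpace ℝ (Fin n₀) → EuclideanSpace ℝ (Fin n₁))
    (f₁ : EuclideanSpace ℝ (Fin n₁) → EuclideanSpace ℝ (Fin n₂))
    (hf₁ : Differentiable ℝ f₁)
    (P : EuclideanSpace ℝ (Fin n₁) →L[ℝ] EuclideanSpace ℝ (Fin n₁))
    (Q : EuclideanSpace ℝ (Fin n₂) →L[ℝ] EuclideanSpace ℝ (Fin n₂))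
    (hP : ∀ u v, ⟪P u, v⟫ = ⟪u, P v⟫)
    (hQ : ∀ u v, ⟪Q u, v⟫ = ⟪u, Q v⟫)
    (a : EuclideanSpace ℝ (Fin n₀)) (b : EuclideanSpace ℝ (Fin n₂))
    (φ : EuclideanSpace ℝ (Fin n₁) → ℝ)
    (hφ : φ = fun x =>
      (1 / 2) * ⟪x - f₀ a, P (x - f₀ a)⟫ + (1 / 2) * ⟪b - f₁ x, Q (b - f₁ x)⟫) :
    ∀ x, gradient φ x
      = P (x - f₀ a) - ContinuousLinearMap.adjoint (fderiv ℝ f₁ x) (Q (b - f₁ x)) := by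
  intro x
  have hlatent := ((hasFDerivAt_id x).sub_const (f₀ a)).hasGradientAt_half_inner_symmetric hP
  have hchild := ((hf₁ x).hasFDerivAt.const_sub b).hasGradientAt_half_inner_symmetric hQ
  subst hφ
  refine (hlatent.add hchild).gradient.trans ?_
  simp only [ContinuousLinearMap.adjoint_id, ContinuousLinearMap.id_apply, map_neg, neg_apply, id,
    sub_eq_add_neg]

/-- the gradient of the predictive-coding free-energy contribution
`φ x = ½⟪x − f₀ a, P (x − f₀ a)⟫ + ½⟪b − f₁ x, Q (b − f₁ x)⟫` at a latent state `x` is the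
precision-weighted prediction error at `x` minus the transposed Jacobian applied to the
precision-weighted prediction error of its child. -/
theorem gradient_free_energy_latent
    (n₀ n₁ n₂ : ℕ)
    (f₀ : EuclideanSpace ℝ (Fin n₀) → EuclideanSpace ℝ (Fin n₁))
    (f₁ : EuclideanSpace ℝ (Fin n₁) → EuclideanSpace ℝ (Fin n₂))
    (hf₀ : Differentiable ℝ f₀) (hf₁ : Differentiable ℝ f₁)
    (P : EuclideanSpace ℝ (Fin n₁) →L[ℝ] EuclideanSpace ℝ (Fin n₁))
    (Q : EuclideanSpace ℝ (Fin n₂) →L[ℝ] EuclideanSpace ℝ (Fin n₂))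
    (hP : ∀ u v, ⟪P u, v⟫ = ⟪u, P v⟫)
    (hQ : ∀ u v, ⟪Q u, v⟫ = ⟪u, Q v⟫)
    (a : EuclideanSpace ℝ (Fin n₀)) (b : EuclideanSpace ℝ (Fin n₂))
    (φ : EuclideanSpace ℝ (Fin n₁) → ℝ)
    (hφ : φ = fun x =>
      (1 / 2) * ⟪x - f₀ a, P (x - f₀ a)⟫ + (1 / 2) * ⟪b - f₁ x, Q (b - f₁ x)⟫) :
    ∀ x, gradient φ x
      = P (x - f₀ a) - ContinuousLinearMap.adjoint (fderiv ℝ f₁ x) (Q (b - f₁ x)) :=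
  gradient_free_energy_latent_general n₀ n₁ n₂ f₀ f₁ hf₁ P Q hP hQ a b φ hφ
end

section
/- For every k ≠ 0, every layer ℓ ∈ {1, …, L−1}, and every state (x 0, …, x (L−1)), the precision-weighted inference update of layer ℓ with step size γ and precision operators (P 1, …, P (L−1), k⁻¹ • P L) equals the precision-weighted inference update of layer ℓ with step size γ/k and precision operators (k • P 1, …, k • P (L−1), P L); that is, scaling the output variance up by k together with rescaling the step size by 1/k is identical to scaling down all intermediate latent-state variances by 1/k while keeping the output variance and step size fixed. -/
/-- with `L = M + 1`, for `k ≠ 0` and every layer `ℓ ∈ {1, …, L−1}`, the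
precision-weighted inference update with step size `γ` and precisions
`(P 1, …, P (L−1), k⁻¹ • P L)` equals the update with step size `γ / k` and precisions
`(k • P 1, …, k • P (L−1), P L)`. -/
theorem scaled_output_variance_update_eq_scaled_latent_variance_update
    (M : ℕ) (n : ℕ → ℕ)
    (f : ∀ ℓ : ℕ, EuclideanSpace ℝ (Fin (n ℓ)) → EuclideanSpace ℝ (Fin (n (ℓ + 1))))
    (hf : ∀ ℓ, Differentiable ℝ (f ℓ))
    (μ : ∀ ℓ : ℕ, EuclideanSpace ℝ (Fin (n ℓ)))
    (hμ : ∀ ℓ, μ (ℓ + 1) = f ℓ (μ ℓ))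
    (𝓛 : EuclideanSpace ℝ (Fin (n (M + 1))) → ℝ) (h𝓛 : Differentiable ℝ 𝓛)
    (P : ∀ ℓ : ℕ, EuclideanSpace ℝ (Fin (n ℓ)) →L[ℝ] EuclideanSpace ℝ (Fin (n ℓ)))
    (x : ∀ ℓ : ℕ, EuclideanSpace ℝ (Fin (n ℓ)))
    (hx0 : x 0 = μ 0)
    (ε : ∀ ℓ : ℕ, EuclideanSpace ℝ (Fin (n ℓ)))
    (hε : ∀ ℓ, ℓ < M → ε (ℓ + 1) = x (ℓ + 1) - f ℓ (x ℓ))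
    (hεL : ε (M + 1) = gradient 𝓛 (f M (x M)))
    (γ k : ℝ) (hk : k ≠ 0) :
    ∀ ℓ, 1 ≤ ℓ → ℓ ≤ M →
      x ℓ - γ • ((if ℓ = M + 1 then k⁻¹ • P ℓ else P ℓ) (ε ℓ) -
          ContinuousLinearMap.adjoint (fderiv ℝ (f ℓ) (x ℓ))
            ((if ℓ + 1 = M + 1 then k⁻¹ • P (ℓ + 1) else P (ℓ + 1)) (ε (ℓ + 1))))
        = x ℓ - (γ / k) • ((if ℓ = M + 1 then P ℓ else k • P ℓ) (ε ℓ) -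
          ContinuousLinearMap.adjoint (fderiv ℝ (f ℓ) (x ℓ))
            ((if ℓ + 1 = M + 1 then P (ℓ + 1) else k • P (ℓ + 1)) (ε (ℓ + 1)))) := by
  intro ℓ h1 h2
  have h : ℓ ≠ M + 1 := by omega
  by_cases hM : ℓ + 1 = M + 1 <;>
    simp only [h, hM, if_true, if_false, ContinuousLinearMap.smul_apply, map_smul, smul_sub,
      smul_smul]
  · rw [div_mul_cancel₀ _ hk, div_eq_mul_inv]
  · rw [div_mul_cancel₀ γ hk]
end

section
/- (Theorem 1, FPA-PC, vanishing part) Under FPA-PC inference dynamics with any step size γ, for every ℓ ∈ {1, …, L−1} and every time t < L − ℓ, the error is zero: ε ℓ t = 0. In words, the error of a node in the computational chain remains zero for all inference steps strictly before its distance L − ℓ to the output node. -/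
/-- Theorem 1, FPA-PC, vanishing part: under FPA-PC inference dynamics with
any step size `γ`, for every `ℓ ∈ {1, …, L−1}` and every time `t < L − ℓ`, the error is
zero: `ε ℓ t = 0`. -/
theorem fpa_pc_error_zero_before_distance
    (L : ℕ) (hL : 1 ≤ L) (n : ℕ → ℕ)
    (f : ∀ ℓ : ℕ, EuclideanSpace ℝ (Fin (n ℓ)) → EuclideanSpace ℝ (Fin (n (ℓ + 1))))
    (hf : ∀ ℓ, Differentiable ℝ (f ℓ))
    (μ : ∀ ℓ : ℕ, EuclideanSpace ℝ (Fin (n ℓ)))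
    (hμ : ∀ ℓ, μ (ℓ + 1) = f ℓ (μ ℓ))
    (𝓛 : EuclideanSpace ℝ (Fin (n L)) → ℝ) (h𝓛 : Differentiable ℝ 𝓛)
    (γ : ℝ)
    (ε : ∀ ℓ : ℕ, ℕ → EuclideanSpace ℝ (Fin (n ℓ)))
    (hε0 : ∀ ℓ, 1 ≤ ℓ → ℓ < L → ε ℓ 0 = 0)
    (hεL : ∀ t, ε L t = gradient 𝓛 (μ L))
    (hεstep : ∀ ℓ t, 1 ≤ ℓ → ℓ < L →
      ε ℓ (t + 1) = ε ℓ t - γ • (ε ℓ t -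
        ContinuousLinearMap.adjoint (fderiv ℝ (f ℓ) (μ ℓ)) (ε (ℓ + 1) t))) :
    ∀ ℓ t, 1 ≤ ℓ → ℓ < L → t < L - ℓ → ε ℓ t = 0 := by
  intro ℓ t
  induction t generalizing ℓ with
  | zero => intro h1 h2 _; exact hε0 ℓ h1 h2
  | succ t ih =>
    intro h1 h2 ht
    have hlt : ℓ + 1 < L := by omega
    have h3 : ε ℓ t = 0 := ih ℓ h1 h2 (by omega)
    have h4 : ε (ℓ + 1) t = 0 := ih (ℓ + 1) (by omega) hlt (by omega)
    rw [hεstep ℓ t h1 h2, h3, h4]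
    simp
end

section
/- (Theorem 1, FPA-PC, first non-zero value) Under FPA-PC inference dynamics with step size γ, for every ℓ ∈ {1, …, L−1} the error at time t = L − ℓ is exactly ε ℓ (L−ℓ) = γ^(L−ℓ) • ((A ℓ)† ((A (ℓ+1))† (⋯ ((A (L−1))† g)))) = γ^(L−ℓ) • e ℓ, where e ℓ is the backpropagation error. In particular, if γ ≠ 0 and e ℓ ≠ 0 (the node has non-zero gradient with respect to the output loss), then ε ℓ t first becomes non-zero at exactly time t = L − ℓ. -/
/-- Theorem 1, FPA-PC, first non-zero value: under FPA-PC inference dynamics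
with step size `γ`, for every `ℓ ∈ {1, …, L−1}` the error at time `L − ℓ` is exactly
`γ^(L−ℓ) • e ℓ`, where `e ℓ` is the backpropagation error. In particular, if `γ ≠ 0` and
`e ℓ ≠ 0`, then `ε ℓ t` first becomes non-zero at exactly time `t = L − ℓ`. -/
theorem fpa_pc_first_nonzero_error
    (L : ℕ) (hL : 1 ≤ L) (n : ℕ → ℕ)
    (f : ∀ ℓ : ℕ, EuclideanSpace ℝ (Fin (n ℓ)) → EuclideanSpace ℝ (Fin (n (ℓ + 1))))
    (hf : ∀ ℓ, Differentiable ℝ (f ℓ))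
    (μ : ∀ ℓ : ℕ, EuclideanSpace ℝ (Fin (n ℓ)))
    (hμ : ∀ ℓ, μ (ℓ + 1) = f ℓ (μ ℓ))
    (𝓛 : EuclideanSpace ℝ (Fin (n L)) → ℝ) (h𝓛 : Differentiable ℝ 𝓛)
    (e : ∀ ℓ : ℕ, EuclideanSpace ℝ (Fin (n ℓ)))
    (heL : e L = gradient 𝓛 (μ L))
    (he : ∀ ℓ, 1 ≤ ℓ → ℓ < L →
      e ℓ = ContinuousLinearMap.adjoint (fderiv ℝ (f ℓ) (μ ℓ)) (e (ℓ + 1)))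
    (γ : ℝ)
    (ε : ∀ ℓ : ℕ, ℕ → EuclideanSpace ℝ (Fin (n ℓ)))
    (hε0 : ∀ ℓ, 1 ≤ ℓ → ℓ < L → ε ℓ 0 = 0)
    (hεL : ∀ t, ε L t = gradient 𝓛 (μ L))
    (hεstep : ∀ ℓ t, 1 ≤ ℓ → ℓ < L →
      ε ℓ (t + 1) = ε ℓ t - γ • (ε ℓ t -
        ContinuousLinearMap.adjoint (fderiv ℝ (f ℓ) (μ ℓ)) (ε (ℓ + 1) t))) :
    ∀ ℓ, 1 ≤ ℓ → ℓ < L →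
      ε ℓ (L - ℓ) = γ ^ (L - ℓ) • e ℓ ∧
      (γ ≠ 0 → e ℓ ≠ 0 → (∀ t, t < L - ℓ → ε ℓ t = 0) ∧ ε ℓ (L - ℓ) ≠ 0) := by
  have hA : ∀ t ℓ, 1 ≤ ℓ → ℓ < L → t < L - ℓ → ε ℓ t = 0 := by
    intro t
    induction t with
    | zero => intro ℓ h1 h2 _; exact hε0 ℓ h1 h2
    | succ t ih =>
      intro ℓ h1 h2 ht
      rw [hεstep ℓ t h1 h2, ih ℓ h1 h2 (by omega),
        ih (ℓ + 1) (by omega) (by omega) (by omega)]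
      simp
  have hB : ∀ k ℓ, 1 ≤ ℓ → ℓ < L → L - ℓ = k → ε ℓ k = γ ^ k • e ℓ := by
    intro k
    induction k with
    | zero => intro ℓ h1 h2 hk; omega
    | succ k ih =>
      intro ℓ h1 h2 hk
      have h0 : ε ℓ k = 0 := hA k ℓ h1 h2 (by omega)
      have hnext : ε (ℓ + 1) k = γ ^ k • e (ℓ + 1) := by
        rcases Nat.lt_or_ge (ℓ + 1) L with h | h
        · exact ih (ℓ + 1) (by omega) h (by omega)
        · have hEq : ℓ + 1 = L := by omega
          have hk0 : k = 0 := by omega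
          subst hEq hk0
          rw [hεL, ← heL]
          simp
      rw [hεstep ℓ k h1 h2, h0, hnext, he ℓ h1 h2]
      simp [map_smul, smul_smul, pow_succ, mul_comm]
  intro ℓ h1 h2
  have hmain := hB (L - ℓ) ℓ h1 h2 rfl
  exact ⟨hmain, fun hγ heℓ => ⟨fun t ht => hA t ℓ h1 h2 ht, by
    rw [hmain]; exact smul_ne_zero (pow_ne_zero _ hγ) heℓ⟩⟩
end

section
/- (Theorem 1, standard PC, vanishing part) Under standard PC inference dynamics with any step size γ, initialised at the feedforward values, for every ℓ ∈ {1, …, L−1} and every time t < L − ℓ the latent state has not moved and its error is zero: x ℓ t = μ ℓ and ε ℓ t = 0. -/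
/-- Theorem 1, standard PC, vanishing part: with `L = M + 1`, under standard
PC inference dynamics with any step size `γ`, initialised at the feedforward values, for
every `ℓ ∈ {1, …, L−1}` and every time `t < L − ℓ`, the latent state has not moved and its
error is zero: `x ℓ t = μ ℓ` and `ε ℓ t = 0`. -/
theorem standard_pc_state_fixed_before_distance
    (M : ℕ) (n : ℕ → ℕ)
    (f : ∀ ℓ : ℕ, EuclideanSpace ℝ (Fin (n ℓ)) → EuclideanSpace ℝ (Fin (n (ℓ + 1))))
    (hf : ∀ ℓ, Differentiable ℝ (f ℓ))
    (μ : ∀ ℓ : ℕ, EuclideanSpace ℝ (Fin (n ℓ)))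
    (hμ : ∀ ℓ, μ (ℓ + 1) = f ℓ (μ ℓ))
    (𝓛 : EuclideanSpace ℝ (Fin (n (M + 1))) → ℝ) (h𝓛 : Differentiable ℝ 𝓛)
    (γ : ℝ)
    (x : ∀ ℓ : ℕ, ℕ → EuclideanSpace ℝ (Fin (n ℓ)))
    (hx0 : ∀ t, x 0 t = μ 0)
    (hxinit : ∀ ℓ, ℓ ≤ M → x ℓ 0 = μ ℓ)
    (ε : ∀ ℓ : ℕ, ℕ → EuclideanSpace ℝ (Fin (n ℓ)))
    (hε : ∀ ℓ t, ℓ < M → ε (ℓ + 1) t = x (ℓ + 1) t - f ℓ (x ℓ t))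
    (hεL : ∀ t, ε (M + 1) t = gradient 𝓛 (f M (x M t)))
    (hxstep : ∀ ℓ t, 1 ≤ ℓ → ℓ ≤ M →
      x ℓ (t + 1) = x ℓ t - γ • (ε ℓ t -
        ContinuousLinearMap.adjoint (fderiv ℝ (f ℓ) (x ℓ t)) (ε (ℓ + 1) t))) :
    ∀ ℓ t, 1 ≤ ℓ → ℓ ≤ M → t < M + 1 - ℓ → x ℓ t = μ ℓ ∧ ε ℓ t = 0 := by

  have X : ∀ t ℓ, 1 ≤ ℓ → ℓ ≤ M → t < M + 1 - ℓ → x ℓ t = μ ℓ := by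
    intro t
    induction t with
    | zero => intro ℓ h1 h2 _; exact hxinit ℓ h2
    | succ t ih =>
      intro ℓ h1 h2 ht
      have ht' : t < M + 1 - ℓ := Nat.lt_of_succ_lt ht
      have hℓM : ℓ + 1 ≤ M := by omega
      have hE : ∀ k, 1 ≤ k → k ≤ M → t < M + 1 - k → ε k t = 0 := by
        intro k hk1 hk2 hkt
        obtain ⟨j, rfl⟩ := Nat.exists_eq_succ_of_ne_zero (by omega : k ≠ 0)
        rw [hε j t (by omega), ih (j + 1) hk1 hk2 hkt]
        have hj : x j t = μ j := by
          rcases Nat.eq_zero_or_pos j with h | h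
          · subst h; exact hx0 t
          · exact ih j h (by omega) (by omega)
        rw [hj, ← hμ j, sub_self]
      have e1 : ε ℓ t = 0 := hE ℓ h1 h2 ht'
      have e2 : ε (ℓ + 1) t = 0 := hE (ℓ + 1) (by omega) hℓM (by omega)
      rw [hxstep ℓ t h1 h2, e1, e2, map_zero, sub_zero, smul_zero, sub_zero]
      exact ih ℓ h1 h2 ht'
  intro ℓ t h1 h2 ht
  refine ⟨X t ℓ h1 h2 ht, ?_⟩
  obtain ⟨j, rfl⟩ := Nat.exists_eq_succ_of_ne_zero (by omega : ℓ ≠ 0)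
  rw [hε j t (by omega), X t (j + 1) h1 h2 ht]
  have hj : x j t = μ j := by
    rcases Nat.eq_zero_or_pos j with h | h
    · subst h; exact hx0 t
    · exact X t j h (by omega) (by omega)
  rw [hj, ← hμ j, sub_self]
end

section
/- (Theorem 1, standard PC, first non-zero value) Under standard PC inference dynamics with step size γ, initialised at the feedforward values, for every ℓ ∈ {1, …, L−1} the first deviation of the latent state from its feedforward value satisfies x ℓ (L−ℓ) − μ ℓ = γ^(L−ℓ) • ((A ℓ)† ((A (ℓ+1))† (⋯ ((A (L−1))† g)))) = γ^(L−ℓ) • e ℓ, and likewise ε ℓ (L−ℓ) = γ^(L−ℓ) • e ℓ, where all Jacobians A ℓ are evaluated at the feedforward values and e ℓ is the backpropagation error. In particular, if γ ≠ 0 and e ℓ ≠ 0, the error ε ℓ t first becomes non-zero at exactly time t = L − ℓ. -/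
/-- Theorem 1, standard PC, first non-zero value: with `L = M + 1`, under
standard PC inference dynamics with step size `γ`, initialised at the feedforward values,
for every `ℓ ∈ {1, …, L−1}` the first deviation of the latent state from its feedforward
value satisfies `x ℓ (L−ℓ) − μ ℓ = γ^(L−ℓ) • e ℓ` and `ε ℓ (L−ℓ) = γ^(L−ℓ) • e ℓ`, where
`e ℓ` is the backpropagation error (Jacobians evaluated at the feedforward values). In
particular, if `γ ≠ 0` and `e ℓ ≠ 0`, the error `ε ℓ t` first becomes non-zero at exactly
time `t = L − ℓ`. -/
theorem standard_pc_first_nonzero_error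
    (M : ℕ) (n : ℕ → ℕ)
    (f : ∀ ℓ : ℕ, EuclideanSpace ℝ (Fin (n ℓ)) → EuclideanSpace ℝ (Fin (n (ℓ + 1))))
    (hf : ∀ ℓ, Differentiable ℝ (f ℓ))
    (μ : ∀ ℓ : ℕ, EuclideanSpace ℝ (Fin (n ℓ)))
    (hμ : ∀ ℓ, μ (ℓ + 1) = f ℓ (μ ℓ))
    (𝓛 : EuclideanSpace ℝ (Fin (n (M + 1))) → ℝ) (h𝓛 : Differentiable ℝ 𝓛)
    (e : ∀ ℓ : ℕ, EuclideanSpace ℝ (Fin (n ℓ)))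
    (heL : e (M + 1) = gradient 𝓛 (μ (M + 1)))
    (he : ∀ ℓ, 1 ≤ ℓ → ℓ ≤ M →
      e ℓ = ContinuousLinearMap.adjoint (fderiv ℝ (f ℓ) (μ ℓ)) (e (ℓ + 1)))
    (γ : ℝ)
    (x : ∀ ℓ : ℕ, ℕ → EuclideanSpace ℝ (Fin (n ℓ)))
    (hx0 : ∀ t, x 0 t = μ 0)
    (hxinit : ∀ ℓ, ℓ ≤ M → x ℓ 0 = μ ℓ)
    (ε : ∀ ℓ : ℕ, ℕ → EuclideanSpace ℝ (Fin (n ℓ)))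
    (hε : ∀ ℓ t, ℓ < M → ε (ℓ + 1) t = x (ℓ + 1) t - f ℓ (x ℓ t))
    (hεL : ∀ t, ε (M + 1) t = gradient 𝓛 (f M (x M t)))
    (hxstep : ∀ ℓ t, 1 ≤ ℓ → ℓ ≤ M →
      x ℓ (t + 1) = x ℓ t - γ • (ε ℓ t -
        ContinuousLinearMap.adjoint (fderiv ℝ (f ℓ) (x ℓ t)) (ε (ℓ + 1) t))) :
    ∀ ℓ, 1 ≤ ℓ → ℓ ≤ M →
      x ℓ (M + 1 - ℓ) - μ ℓ = γ ^ (M + 1 - ℓ) • e ℓ ∧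
      ε ℓ (M + 1 - ℓ) = γ ^ (M + 1 - ℓ) • e ℓ ∧
      (γ ≠ 0 → e ℓ ≠ 0 →
        (∀ t, t < M + 1 - ℓ → ε ℓ t = 0) ∧ ε ℓ (M + 1 - ℓ) ≠ 0) := by
  -- Lemma A: states remain at feedforward values up to time M - ℓ
  have lemA : ∀ t ℓ, ℓ ≤ M → t ≤ M - ℓ → x ℓ t = μ ℓ := by
    intro t
    induction t with
    | zero => exact fun ℓ hℓ _ => hxinit ℓ hℓ
    | succ t ih =>
      intro ℓ hℓ ht
      rcases Nat.eq_zero_or_pos ℓ with h0 | h1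
      · rw [h0]; exact hx0 (t + 1)
      · have hℓM : ℓ < M := by omega
        obtain ⟨m, rfl⟩ : ∃ m, ℓ = m + 1 := ⟨ℓ - 1, by omega⟩
        have hxm : x m t = μ m := by
          rcases Nat.eq_zero_or_pos m with h0 | h1m
          · rw [h0]; exact hx0 t
          · exact ih m (by omega) (by omega)
        have hε1 : ε (m + 1) t = 0 := by
          rw [hε m t (by omega), hxm, ih (m + 1) (by omega) (by omega), hμ m, sub_self]
        have hε2 : ε (m + 1 + 1) t = 0 := by
          rw [hε (m + 1) t (by omega), ih (m + 1) (by omega) (by omega),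
            ih (m + 1 + 1) (by omega) (by omega), hμ (m + 1), sub_self]
        rw [hxstep (m + 1) t (by omega) (by omega), hε1, hε2,
          ih (m + 1) (by omega) (by omega)]
        simp
  -- errors vanish up to time M - ℓ
  have lemE0 : ∀ ℓ t, 1 ≤ ℓ → ℓ ≤ M → t ≤ M - ℓ → ε ℓ t = 0 := by
    intro ℓ t h1 hM ht
    obtain ⟨m, rfl⟩ : ∃ m, ℓ = m + 1 := ⟨ℓ - 1, by omega⟩
    rw [hε m t (by omega), lemA t (m + 1) hM ht, lemA t m (by omega) (by omega),
      hμ m, sub_self]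
  -- main downward induction (d = M - ℓ)
  have Q : ∀ d ℓ, 1 ≤ ℓ → ℓ + d = M →
      x ℓ (d + 1) - μ ℓ = γ ^ (d + 1) • e ℓ ∧ ε ℓ (d + 1) = γ ^ (d + 1) • e ℓ := by
    intro d
    induction d with
    | zero =>
      intro ℓ h1 hM
      obtain rfl : ℓ = M := by omega
      have hεtop : ε (ℓ + 1) 0 = e (ℓ + 1) := by
        rw [hεL 0, hxinit ℓ le_rfl, ← hμ ℓ, heL]
      have hε0 : ε ℓ 0 = 0 := lemE0 ℓ 0 h1 le_rfl (by omega)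
      have hx1 : x ℓ (0 + 1) - μ ℓ = γ ^ (0 + 1) • e ℓ := by
        rw [hxstep ℓ 0 h1 le_rfl, hε0, hεtop, hxinit ℓ le_rfl, he ℓ h1 le_rfl]
        rw [zero_sub, smul_neg, sub_neg_eq_add, add_sub_cancel_left, pow_one]
      refine ⟨hx1, ?_⟩
      obtain ⟨m, rfl⟩ : ∃ m, ℓ = m + 1 := ⟨ℓ - 1, by omega⟩
      have hxm : x m (0 + 1) = μ m := by
        rcases Nat.eq_zero_or_pos m with h0 | h1m
        · rw [h0]; exact hx0 1
        · exact lemA 1 m (by omega) (by omega)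
      rw [hε m (0 + 1) (by omega), hxm, ← hμ m, ← hx1]
    | succ d ih =>
      intro ℓ h1 hM
      have hih := (ih (ℓ + 1) (by omega) (by omega)).2
      have hxℓ : x ℓ (d + 1) = μ ℓ := lemA (d + 1) ℓ (by omega) (by omega)
      have hεℓ : ε ℓ (d + 1) = 0 := lemE0 ℓ (d + 1) h1 (by omega) (by omega)
      have hx2 : x ℓ (d + 1 + 1) - μ ℓ = γ ^ (d + 1 + 1) • e ℓ := by
        rw [hxstep ℓ (d + 1) h1 (by omega), hεℓ, hih, hxℓ, map_smul,
          ← he ℓ h1 (by omega), zero_sub, smul_neg, sub_neg_eq_add,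
          add_sub_cancel_left, smul_smul, ← pow_succ']
      refine ⟨hx2, ?_⟩
      obtain ⟨m, rfl⟩ : ∃ m, ℓ = m + 1 := ⟨ℓ - 1, by omega⟩
      have hxm : x m (d + 1 + 1) = μ m := by
        rcases Nat.eq_zero_or_pos m with h0 | h1m
        · rw [h0]; exact hx0 (d + 2)
        · exact lemA (d + 1 + 1) m (by omega) (by omega)
      rw [hε m (d + 1 + 1) (by omega), hxm, ← hμ m, ← hx2]
  intro ℓ h1 hM
  have hd := Q (M - ℓ) ℓ h1 (by omega)
  have hMℓ : M + 1 - ℓ = (M - ℓ) + 1 := by omega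
  rw [hMℓ]
  refine ⟨hd.1, hd.2, fun hγ he0 => ⟨?_, ?_⟩⟩
  · intro t ht
    exact lemE0 ℓ t h1 hM (by omega)
  · rw [hd.2]
    exact smul_ne_zero (pow_ne_zero _ hγ) he0
end

section
/- (Corollary 1) Under FPA-PC inference dynamics with any step size γ, fix ℓ ∈ {1, …, L−1} and suppose the backpropagation error e ℓ is non-zero. Then for any convergence time t_c ∈ ℕ such that ε ℓ t = e ℓ for all t ≥ t_c, one has t_c ≥ L − ℓ; that is, the convergence time of the error at a node is lower-bounded by its distance, in nodes, to the output node. -/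
/-- Corollary 1: under FPA-PC inference dynamics with any step size `γ`, if
the backpropagation error `e ℓ` of node `ℓ ∈ {1, …, L−1}` is non-zero, then any convergence
time `t_c` (with `ε ℓ t = e ℓ` for all `t ≥ t_c`) satisfies `t_c ≥ L − ℓ`: the convergence
time of the error at a node is lower-bounded by its distance, in nodes, to the output. -/
theorem fpa_pc_convergence_time_lower_bound
    (L : ℕ) (hL : 1 ≤ L) (n : ℕ → ℕ)
    (f : ∀ ℓ : ℕ, EuclideanSpace ℝ (Fin (n ℓ)) → EuclideanSpace ℝ (Fin (n (ℓ + 1))))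
    (hf : ∀ ℓ, Differentiable ℝ (f ℓ))
    (μ : ∀ ℓ : ℕ, EuclideanSpace ℝ (Fin (n ℓ)))
    (hμ : ∀ ℓ, μ (ℓ + 1) = f ℓ (μ ℓ))
    (𝓛 : EuclideanSpace ℝ (Fin (n L)) → ℝ) (h𝓛 : Differentiable ℝ 𝓛)
    (e : ∀ ℓ : ℕ, EuclideanSpace ℝ (Fin (n ℓ)))
    (heL : e L = gradient 𝓛 (μ L))
    (he : ∀ ℓ, 1 ≤ ℓ → ℓ < L →
      e ℓ = ContinuousLinearMap.adjoint (fderiv ℝ (f ℓ) (μ ℓ)) (e (ℓ + 1)))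
    (γ : ℝ)
    (ε : ∀ ℓ : ℕ, ℕ → EuclideanSpace ℝ (Fin (n ℓ)))
    (hε0 : ∀ ℓ, 1 ≤ ℓ → ℓ < L → ε ℓ 0 = 0)
    (hεL : ∀ t, ε L t = gradient 𝓛 (μ L))
    (hεstep : ∀ ℓ t, 1 ≤ ℓ → ℓ < L →
      ε ℓ (t + 1) = ε ℓ t - γ • (ε ℓ t -
        ContinuousLinearMap.adjoint (fderiv ℝ (f ℓ) (μ ℓ)) (ε (ℓ + 1) t)))
    (ℓ : ℕ) (hℓ1 : 1 ≤ ℓ) (hℓL : ℓ < L)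
    (heℓ : e ℓ ≠ 0)
    (tc : ℕ) (htc : ∀ t, tc ≤ t → ε ℓ t = e ℓ) :
    L - ℓ ≤ tc := by
  -- Key: ε k t = 0 whenever 1 ≤ k and k + t < L.
  have key : ∀ t k, 1 ≤ k → k + t < L → ε k t = 0 := by
    intro t
    induction t with
    | zero => intro k hk1 hkL; exact hε0 k hk1 (by omega)
    | succ t ih =>
      intro k hk1 hkL
      have hkL' : k < L := by omega
      rw [hεstep k t hk1 hkL', ih k hk1 (by omega), ih (k + 1) (by omega) (by omega)]
      simp
  by_contra h
  push_neg at h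
  have h0 : ε ℓ tc = 0 := key tc ℓ hℓ1 (by omega)
  exact heℓ (by rw [← htc tc le_rfl, h0])
end

section
/- (Convergence of FPA-PC inference) If the step size satisfies 0 < γ < 2, then under FPA-PC inference dynamics, for every ℓ ∈ {1, …, L} the error sequence converges to the backpropagation error: ε ℓ t → e ℓ as t → ∞ (Tendsto (fun t => ε ℓ t) atTop (𝓝 (e ℓ))). -/
open Filter Topology

lemma aux_tendsto_zero (r : ℝ) (hr0 : 0 ≤ r) (hr1 : r < 1)
    (u b : ℕ → ℝ) (hu : ∀ t, 0 ≤ u t)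
    (hb : Tendsto b atTop (𝓝 0))
    (hstep : ∀ t, u (t + 1) ≤ r * u t + b t) :
    Tendsto u atTop (𝓝 0) := by
  rw [Metric.tendsto_atTop]
  intro ε hε
  have h1r : 0 < 1 - r := by linarith
  set δ : ℝ := (1 - r) * ε / 4 with hδdef
  have hδ : 0 < δ := by positivity
  obtain ⟨N, hN⟩ := (Metric.tendsto_atTop.mp hb) δ hδ
  have hbN : ∀ t, N ≤ t → b t ≤ δ := by
    intro t ht
    have := hN t ht
    rw [Real.dist_eq, sub_zero] at this
    exact le_of_lt (lt_of_abs_lt this)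
  have key : ∀ k, u (N + k) ≤ r ^ k * u N + δ / (1 - r) := by
    intro k
    induction k with
    | zero => simp; positivity
    | succ k ih =>
      have h2 := hstep (N + k)
      have : r * u (N + k) ≤ r * (r ^ k * u N + δ / (1 - r)) :=
        mul_le_mul_of_nonneg_left ih hr0
      have hb' := hbN (N + k) (Nat.le_add_right _ _)
      have : u (N + k + 1) ≤ r * (r ^ k * u N + δ / (1 - r)) + δ := by linarith
      calc u (N + (k + 1)) = u (N + k + 1) := by ring_nf
        _ ≤ r * (r ^ k * u N + δ / (1 - r)) + δ := this
        _ = r ^ (k + 1) * u N + (r * (δ / (1 - r)) + δ) := by ring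
        _ ≤ r ^ (k + 1) * u N + δ / (1 - r) := by
            have : r * (δ / (1 - r)) + δ = δ / (1 - r) := by field_simp; ring
            rw [this]
  have hgeo : Tendsto (fun k => r ^ k * u N) atTop (𝓝 0) := by
    simpa using (tendsto_pow_atTop_nhds_zero_of_lt_one hr0 hr1).mul_const (u N)
  obtain ⟨K, hK⟩ := (Metric.tendsto_atTop.mp hgeo) (ε / 4) (by positivity)
  refine ⟨N + K, fun t ht => ?_⟩
  have hkey := key (t - N)
  have ht' : N + (t - N) = t := by omega
  rw [ht'] at hkey
  have hK' := hK (t - N) (by omega)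
  rw [Real.dist_eq, sub_zero] at hK' ⊢
  have hgl : r ^ (t - N) * u N < ε / 4 := lt_of_abs_lt hK'
  have hδr : δ / (1 - r) = ε / 4 := by rw [hδdef]; field_simp
  rw [abs_of_nonneg (hu t)]
  nlinarith [hu t]

/-- Convergence of FPA-PC inference: if the step size satisfies `0 < γ < 2`,
then under FPA-PC inference dynamics, for every `ℓ ∈ {1, …, L}` the error sequence converges
to the backpropagation error: `ε ℓ t → e ℓ` as `t → ∞`. -/
theorem fpa_pc_inference_converges
    (L : ℕ) (hL : 1 ≤ L) (n : ℕ → ℕ)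
    (f : ∀ ℓ : ℕ, EuclideanSpace ℝ (Fin (n ℓ)) → EuclideanSpace ℝ (Fin (n (ℓ + 1))))
    (hf : ∀ ℓ, Differentiable ℝ (f ℓ))
    (μ : ∀ ℓ : ℕ, EuclideanSpace ℝ (Fin (n ℓ)))
    (hμ : ∀ ℓ, μ (ℓ + 1) = f ℓ (μ ℓ))
    (𝓛 : EuclideanSpace ℝ (Fin (n L)) → ℝ) (h𝓛 : Differentiable ℝ 𝓛)
    (e : ∀ ℓ : ℕ, EuclideanSpace ℝ (Fin (n ℓ)))
    (heL : e L = gradient 𝓛 (μ L))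
    (he : ∀ ℓ, 1 ≤ ℓ → ℓ < L →
      e ℓ = ContinuousLinearMap.adjoint (fderiv ℝ (f ℓ) (μ ℓ)) (e (ℓ + 1)))
    (γ : ℝ) (hγ0 : 0 < γ) (hγ2 : γ < 2)
    (ε : ∀ ℓ : ℕ, ℕ → EuclideanSpace ℝ (Fin (n ℓ)))
    (hε0 : ∀ ℓ, 1 ≤ ℓ → ℓ < L → ε ℓ 0 = 0)
    (hεL : ∀ t, ε L t = gradient 𝓛 (μ L))
    (hεstep : ∀ ℓ t, 1 ≤ ℓ → ℓ < L →
      ε ℓ (t + 1) = ε ℓ t - γ • (ε ℓ t -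
        ContinuousLinearMap.adjoint (fderiv ℝ (f ℓ) (μ ℓ)) (ε (ℓ + 1) t))) :
    ∀ ℓ, 1 ≤ ℓ → ℓ ≤ L → Tendsto (fun t => ε ℓ t) atTop (𝓝 (e ℓ)) := by
  suffices h : ∀ k ℓ, 1 ≤ ℓ → ℓ + k = L → Tendsto (fun t => ε ℓ t) atTop (𝓝 (e ℓ)) by
    intro ℓ h1 h2
    exact h (L - ℓ) ℓ h1 (by omega)
  intro k
  induction k with
  | zero =>
    intro ℓ h1 h2
    simp only [Nat.add_zero] at h2
    subst h2
    have hfun : (fun t => ε ℓ t) = fun _ => e ℓ := by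
      funext t; rw [hεL, heL]
    rw [hfun]
    exact tendsto_const_nhds
  | succ k ih =>
    intro ℓ h1 h2
    have hℓL : ℓ < L := by omega
    have ihs : Tendsto (fun t => ε (ℓ + 1) t) atTop (𝓝 (e (ℓ + 1))) :=
      ih (ℓ + 1) (by omega) (by omega)
    set A := ContinuousLinearMap.adjoint (fderiv ℝ (f ℓ) (μ ℓ)) with hA
    have heq : e ℓ = A (e (ℓ + 1)) := he ℓ h1 hℓL
    rw [tendsto_iff_norm_sub_tendsto_zero]
    have hc : Tendsto (fun t => ‖ε (ℓ + 1) t - e (ℓ + 1)‖) atTop (𝓝 0) :=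
      tendsto_iff_norm_sub_tendsto_zero.mp ihs
    have habs : |1 - γ| < 1 := by rw [abs_lt]; constructor <;> linarith
    refine aux_tendsto_zero (|1 - γ|) (abs_nonneg _) habs _
      (fun t => γ * (‖A‖ * ‖ε (ℓ + 1) t - e (ℓ + 1)‖)) (fun t => norm_nonneg _)
      ?_ ?_
    · have := hc.const_mul (γ * ‖A‖)
      simpa [mul_assoc] using this
    · intro t
      have hrec : ε ℓ (t + 1) - e ℓ =
          (1 - γ) • (ε ℓ t - e ℓ) + γ • (A (ε (ℓ + 1) t - e (ℓ + 1))) := by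
        rw [hεstep ℓ t h1 hℓL, map_sub]
        rw [heq]
        module
      rw [hrec]
      calc ‖(1 - γ) • (ε ℓ t - e ℓ) + γ • A (ε (ℓ + 1) t - e (ℓ + 1))‖
          ≤ ‖(1 - γ) • (ε ℓ t - e ℓ)‖ + ‖γ • A (ε (ℓ + 1) t - e (ℓ + 1))‖ :=
            norm_add_le _ _
        _ ≤ |1 - γ| * ‖ε ℓ t - e ℓ‖ + γ * (‖A‖ * ‖ε (ℓ + 1) t - e (ℓ + 1)‖) := by
            rw [norm_smul, norm_smul, Real.norm_eq_abs, Real.norm_eq_abs,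
              abs_of_pos hγ0]
            gcongr
            exact A.le_opNorm _
end

section
/- (Exact convergence of FPA-PC with unit step size) Under FPA-PC inference dynamics with step size γ = 1, for every ℓ ∈ {1, …, L} and every time t ≥ L − ℓ, the error equals the backpropagation error: ε ℓ t = e ℓ. Hence with γ = 1, FPA-PC computes exactly the backpropagation gradients for node ℓ in exactly L − ℓ inference steps, its distance to the output node. -/
/-- Exact convergence of FPA-PC with unit step size: under FPA-PC inference
dynamics with step size `γ = 1`, for every `ℓ ∈ {1, …, L}` and every time `t ≥ L − ℓ`, the
error equals the backpropagation error: `ε ℓ t = e ℓ`. Hence FPA-PC with unit step size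
computes exactly the backpropagation gradients for node `ℓ` in exactly `L − ℓ` steps. -/
theorem fpa_pc_unit_step_exact
    (L : ℕ) (hL : 1 ≤ L) (n : ℕ → ℕ)
    (f : ∀ ℓ : ℕ, EuclideanSpace ℝ (Fin (n ℓ)) → EuclideanSpace ℝ (Fin (n (ℓ + 1))))
    (hf : ∀ ℓ, Differentiable ℝ (f ℓ))
    (μ : ∀ ℓ : ℕ, EuclideanSpace ℝ (Fin (n ℓ)))
    (hμ : ∀ ℓ, μ (ℓ + 1) = f ℓ (μ ℓ))
    (𝓛 : EuclideanSpace ℝ (Fin (n L)) → ℝ) (h𝓛 : Differentiable ℝ 𝓛)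
    (e : ∀ ℓ : ℕ, EuclideanSpace ℝ (Fin (n ℓ)))
    (heL : e L = gradient 𝓛 (μ L))
    (he : ∀ ℓ, 1 ≤ ℓ → ℓ < L →
      e ℓ = ContinuousLinearMap.adjoint (fderiv ℝ (f ℓ) (μ ℓ)) (e (ℓ + 1)))
    (γ : ℝ) (hγ : γ = 1)
    (ε : ∀ ℓ : ℕ, ℕ → EuclideanSpace ℝ (Fin (n ℓ)))
    (hε0 : ∀ ℓ, 1 ≤ ℓ → ℓ < L → ε ℓ 0 = 0)
    (hεL : ∀ t, ε L t = gradient 𝓛 (μ L))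
    (hεstep : ∀ ℓ t, 1 ≤ ℓ → ℓ < L →
      ε ℓ (t + 1) = ε ℓ t - γ • (ε ℓ t -
        ContinuousLinearMap.adjoint (fderiv ℝ (f ℓ) (μ ℓ)) (ε (ℓ + 1) t))) :
    ∀ ℓ t, 1 ≤ ℓ → ℓ ≤ L → L - ℓ ≤ t → ε ℓ t = e ℓ := by
  have key : ∀ d ℓ t, ℓ + d = L → 1 ≤ ℓ → d ≤ t → ε ℓ t = e ℓ := by
    intro d
    induction d with
    | zero =>
      intro ℓ t h _ _
      have : ℓ = L := by omega
      subst this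
      rw [hεL, heL]
    | succ d ih =>
      intro ℓ t h h1 ht
      obtain ⟨s, rfl⟩ : ∃ s, t = s + 1 := ⟨t - 1, by omega⟩
      rw [hεstep ℓ s h1 (by omega), hγ, one_smul, sub_sub_cancel,
        ih (ℓ + 1) s (by omega) (by omega) (by omega), ← he ℓ h1 (by omega)]
  intro ℓ t h1 h2 ht
  exact key (L - ℓ) ℓ t (by omega) h1 ht
end

section
/- (Z-IL computes backpropagation errors) Under Z-IL dynamics (latent states initialised at the feedforward values, step size 1, and layer ℓ updated exclusively at inference step L − ℓ), for every ℓ ∈ {1, …, L−1}: x (ℓ−1) (L−ℓ) = μ (ℓ−1), and at its update time the layer's deviation and error equal the backpropagation error: x ℓ (L−ℓ) − μ ℓ = e ℓ and ε ℓ (L−ℓ) = e ℓ, where the Jacobians in e ℓ are evaluated at the feedforward values. -/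
/-- Z-IL computes backpropagation errors: with `L = M + 1`, under Z-IL
dynamics (latent states initialised at the feedforward values, step size 1, layer `ℓ`
updated exclusively at inference step `L − ℓ`), for every `ℓ ∈ {1, …, L−1}`:
`x (ℓ−1) (L−ℓ) = μ (ℓ−1)`, and at its update time the layer's deviation and error equal the
backpropagation error: `x ℓ (L−ℓ) − μ ℓ = e ℓ` and `ε ℓ (L−ℓ) = e ℓ`, where the Jacobians
in `e ℓ` are evaluated at the feedforward values. -/
theorem zil_computes_backprop_errors
    (M : ℕ) (n : ℕ → ℕ)
    (f : ∀ ℓ : ℕ, EuclideanSpace ℝ (Fin (n ℓ)) → EuclideanSpace ℝ (Fin (n (ℓ + 1))))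
    (hf : ∀ ℓ, Differentiable ℝ (f ℓ))
    (μ : ∀ ℓ : ℕ, EuclideanSpace ℝ (Fin (n ℓ)))
    (hμ : ∀ ℓ, μ (ℓ + 1) = f ℓ (μ ℓ))
    (𝓛 : EuclideanSpace ℝ (Fin (n (M + 1))) → ℝ) (h𝓛 : Differentiable ℝ 𝓛)
    (e : ∀ ℓ : ℕ, EuclideanSpace ℝ (Fin (n ℓ)))
    (heL : e (M + 1) = gradient 𝓛 (μ (M + 1)))
    (he : ∀ ℓ, 1 ≤ ℓ → ℓ ≤ M →
      e ℓ = ContinuousLinearMap.adjoint (fderiv ℝ (f ℓ) (μ ℓ)) (e (ℓ + 1)))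
    (x : ∀ ℓ : ℕ, ℕ → EuclideanSpace ℝ (Fin (n ℓ)))
    (hx0 : ∀ t, x 0 t = μ 0)
    (hxinit : ∀ ℓ, ℓ ≤ M → x ℓ 0 = μ ℓ)
    (ε : ∀ ℓ : ℕ, ℕ → EuclideanSpace ℝ (Fin (n ℓ)))
    (hε : ∀ ℓ t, ℓ < M → ε (ℓ + 1) t = x (ℓ + 1) t - f ℓ (x ℓ t))
    (hεL : ∀ t, ε (M + 1) t = gradient 𝓛 (f M (x M t)))
    (hxstep : ∀ ℓ t, 1 ≤ ℓ → ℓ ≤ M →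
      x ℓ (t + 1) = if t + 1 = M + 1 - ℓ then
          x ℓ t - (ε ℓ t -
            ContinuousLinearMap.adjoint (fderiv ℝ (f ℓ) (x ℓ t)) (ε (ℓ + 1) t))
        else x ℓ t) :
    ∀ ℓ, 1 ≤ ℓ → ℓ ≤ M →
      x (ℓ - 1) (M + 1 - ℓ) = μ (ℓ - 1) ∧
      x ℓ (M + 1 - ℓ) - μ ℓ = e ℓ ∧
      ε ℓ (M + 1 - ℓ) = e ℓ := by
  have frozen : ∀ ℓ, 1 ≤ ℓ → ℓ ≤ M → ∀ t, t ≤ M - ℓ → x ℓ t = μ ℓ := by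
    intro ℓ h1 h2 t
    induction t with
    | zero => intro _; exact hxinit ℓ h2
    | succ t ih =>
      intro ht
      rw [hxstep ℓ t h1 h2, if_neg (by omega)]
      exact ih (by omega)
  have step : ∀ ℓ, 1 ≤ ℓ → ℓ ≤ M → ε (ℓ + 1) (M - ℓ) = e (ℓ + 1) →
      x ℓ (M + 1 - ℓ) - μ ℓ = e ℓ := by
    intro ℓ h1 h2 hεe
    obtain ⟨k, rfl⟩ : ∃ k, ℓ = k + 1 := ⟨ℓ - 1, by omega⟩
    have ht : M + 1 - (k + 1) = (M - (k + 1)) + 1 := by omega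
    have hfroz : x (k + 1) (M - (k + 1)) = μ (k + 1) := frozen (k + 1) h1 h2 _ le_rfl
    have hx1 : x k (M - (k + 1)) = μ k := by
      rcases Nat.eq_zero_or_pos k with h0 | hp
      · subst h0; exact hx0 _
      · exact frozen k hp (by omega) _ (by omega)
    have hεt : ε (k + 1) (M - (k + 1)) = 0 := by
      rw [hε k _ (by omega), hfroz, hx1, ← hμ k, sub_self]
    have hst := hxstep (k + 1) (M - (k + 1)) h1 h2
    rw [if_pos (by omega)] at hst
    rw [ht, hst, hεt, hfroz, hεe, he (k + 1) h1 h2]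
    abel
  have main : ∀ j ℓ, 1 ≤ ℓ → ℓ ≤ M → M - ℓ = j →
      ε (ℓ + 1) (M - ℓ) = e (ℓ + 1) ∧ x ℓ (M + 1 - ℓ) - μ ℓ = e ℓ := by
    intro j
    induction j with
    | zero =>
      intro ℓ h1 h2 hj
      have hℓ : ℓ = M := by omega
      subst hℓ
      have hεe : ε (ℓ + 1) (ℓ - ℓ) = e (ℓ + 1) := by
        rw [Nat.sub_self, hεL 0, hxinit ℓ le_rfl, ← hμ ℓ, heL]
      exact ⟨hεe, step ℓ h1 h2 hεe⟩
    | succ j ih =>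
      intro ℓ h1 h2 hj
      have ihl := ih (ℓ + 1) (by omega) (by omega) (by omega)
      have hεe : ε (ℓ + 1) (M - ℓ) = e (ℓ + 1) := by
        have hMl : M - ℓ = M + 1 - (ℓ + 1) := by omega
        rw [hMl, hε ℓ _ (by omega), frozen ℓ h1 h2 _ (by omega), ← hμ ℓ]
        exact ihl.2
      exact ⟨hεe, step ℓ h1 h2 hεe⟩
  intro ℓ h1 h2
  obtain ⟨hεe, hdev⟩ := main (M - ℓ) ℓ h1 h2 rfl
  obtain ⟨k, rfl⟩ : ∃ k, ℓ = k + 1 := ⟨ℓ - 1, by omega⟩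
  have hxprev : x k (M + 1 - (k + 1)) = μ k := by
    rcases Nat.eq_zero_or_pos k with h0 | hp
    · subst h0; exact hx0 _
    · exact frozen k hp (by omega) _ (by omega)
  refine ⟨hxprev, hdev, ?_⟩
  rw [hε k _ (by omega), hxprev, ← hμ k]
  exact hdev
end

section
/- (Zero output loss: feedforward values are a fixed point of standard PC) If the output gradient vanishes, g = gradient 𝓛 (μ L) = 0, then under standard PC inference dynamics with any step size γ, initialised at the feedforward values, the latent states never move: x ℓ t = μ ℓ and ε ℓ t = 0 for all ℓ ∈ {1, …, L−1} and all t ∈ ℕ, and also ε L t = 0 for all t. Consequently all PC parameter updates (which are proportional to the converged errors) are zero, matching the zero backpropagation update. -/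
/-- Zero output loss: feedforward values are a fixed point of standard PC:
with `L = M + 1`, if the output gradient vanishes (`gradient 𝓛 (μ L) = 0`), then under
standard PC inference dynamics with any step size `γ`, initialised at the feedforward
values, the latent states never move: `x ℓ t = μ ℓ` and `ε ℓ t = 0` for all
`ℓ ∈ {1, …, L−1}` and all `t`, and also `ε L t = 0` for all `t`. -/
theorem standard_pc_zero_loss_fixed_point
    (M : ℕ) (n : ℕ → ℕ)
    (f : ∀ ℓ : ℕ, EuclideanSpace ℝ (Fin (n ℓ)) → EuclideanSpace ℝ (Fin (n (ℓ + 1))))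
    (hf : ∀ ℓ, Differentiable ℝ (f ℓ))
    (μ : ∀ ℓ : ℕ, EuclideanSpace ℝ (Fin (n ℓ)))
    (hμ : ∀ ℓ, μ (ℓ + 1) = f ℓ (μ ℓ))
    (𝓛 : EuclideanSpace ℝ (Fin (n (M + 1))) → ℝ) (h𝓛 : Differentiable ℝ 𝓛)
    (hg : gradient 𝓛 (μ (M + 1)) = 0)
    (γ : ℝ)
    (x : ∀ ℓ : ℕ, ℕ → EuclideanSpace ℝ (Fin (n ℓ)))
    (hx0 : ∀ t, x 0 t = μ 0)
    (hxinit : ∀ ℓ, ℓ ≤ M → x ℓ 0 = μ ℓ)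
    (ε : ∀ ℓ : ℕ, ℕ → EuclideanSpace ℝ (Fin (n ℓ)))
    (hε : ∀ ℓ t, ℓ < M → ε (ℓ + 1) t = x (ℓ + 1) t - f ℓ (x ℓ t))
    (hεL : ∀ t, ε (M + 1) t = gradient 𝓛 (f M (x M t)))
    (hxstep : ∀ ℓ t, 1 ≤ ℓ → ℓ ≤ M →
      x ℓ (t + 1) = x ℓ t - γ • (ε ℓ t -
        ContinuousLinearMap.adjoint (fderiv ℝ (f ℓ) (x ℓ t)) (ε (ℓ + 1) t))) :
    (∀ ℓ t, 1 ≤ ℓ → ℓ ≤ M → x ℓ t = μ ℓ ∧ ε ℓ t = 0) ∧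
      (∀ t, ε (M + 1) t = 0) := by

  have key : ∀ t, ∀ ℓ, ℓ ≤ M → x ℓ t = μ ℓ := by
    intro t
    induction t with
    | zero => exact hxinit
    | succ t ih =>
      intro ℓ hℓ
      rcases Nat.eq_zero_or_pos ℓ with h0 | h1
      · subst h0; exact hx0 _
      · have hxℓ : x ℓ t = μ ℓ := ih ℓ hℓ
        have hεℓ : ε ℓ t = 0 := by
          obtain ⟨k, rfl⟩ := Nat.exists_eq_add_of_lt h1
          rw [zero_add] at *
          rw [hε k t (by omega), ih k (by omega), hxℓ, hμ, sub_self]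
        have hεs : ε (ℓ + 1) t = 0 := by
          rcases Nat.lt_or_ge ℓ M with hlt | hge
          · rw [hε ℓ t hlt, ih (ℓ+1) hlt, hxℓ, hμ, sub_self]
          · have : ℓ = M := le_antisymm hℓ hge
            subst this
            rw [hεL t, hxℓ, ← hμ, hg]
        rw [hxstep ℓ t h1 hℓ, hεℓ, hεs, map_zero, sub_zero, smul_zero, sub_zero, hxℓ]
  have hεz : ∀ ℓ t, 1 ≤ ℓ → ℓ ≤ M → ε ℓ t = 0 := by
    intro ℓ t h1 hℓ
    obtain ⟨k, rfl⟩ := Nat.exists_eq_add_of_lt h1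
    rw [zero_add] at *
    rw [hε k t (by omega), key t (k+1) hℓ, key t k (by omega), hμ, sub_self]
  refine ⟨fun ℓ t h1 hℓ => ⟨key t ℓ hℓ, hεz ℓ t h1 hℓ⟩, fun t => ?_⟩
  rw [hεL t, key t M le_rfl, ← hμ, hg]
end
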